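/- In the group ⟨x₁, x₁', x₂ | x₁ = x₁', (x₁' x₁ x₁'⁻¹ x₂)² = (x₂ x₁' x₁ x₁'⁻¹)², x₁ = x₁'⁻¹ x₂⁻¹ x₁' x₂ x₁'⟩, after eliminating x₁', the group is isomorphic to ℤ², and after adding the relation x₂ x₁' x₁ = e it is isomorphic to ℤ. -/

import Mathlib

/-- `x 0 = x₁`, `x 1 = x₁'`, `x 2 = x₂`. The relations of the van Kampen presentation of
`π₁(ℂ² − C₁)` for a conic with one tangent line. -/
def C1rels : Set (FreeGroup (Fin 3)) :=
  { FreeGroup.of 0 * (FreeGroup.of 1)⁻¹,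
    (FreeGroup.of 1 * FreeGroup.of 0 * (FreeGroup.of 1)⁻¹ * FreeGroup.of 2) ^ 2 *
      ((FreeGroup.of 2 * FreeGroup.of 1 * FreeGroup.of 0 * (FreeGroup.of 1)⁻¹) ^ 2)⁻¹,
    FreeGroup.of 0 *
      ((FreeGroup.of 1)⁻¹ * (FreeGroup.of 2)⁻¹ * FreeGroup.of 1 * FreeGroup.of 2 *
        FreeGroup.of 1)⁻¹ }

namespace C1aux

lemma rel_one {α : Type*} {rels : Set (FreeGroup α)} {r : FreeGroup α} (h : r ∈ rels) :
    PresentedGroup.mk rels r = 1 :=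
  (QuotientGroup.eq_one_iff r).2 (Subgroup.subset_normalClosure h)

variable {rels : Set (FreeGroup (Fin 3))} (h1 : C1rels ⊆ rels)

lemma hab (h1 : C1rels ⊆ rels) :
    (PresentedGroup.of 0 : PresentedGroup rels) = PresentedGroup.of 1 := by
  have := rel_one (h1 (show FreeGroup.of 0 * (FreeGroup.of 1)⁻¹ ∈ C1rels by
    simp [C1rels]))
  simp only [map_mul, map_inv] at this
  exact mul_inv_eq_one.mp this

lemma hconj (h1 : C1rels ⊆ rels) :
    (PresentedGroup.of 0 : PresentedGroup rels) =
      (PresentedGroup.of 1)⁻¹ * (PresentedGroup.of 2)⁻¹ * PresentedGroup.of 1 *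
        PresentedGroup.of 2 * PresentedGroup.of 1 := by
  have := rel_one (h1 (show FreeGroup.of 0 *
      ((FreeGroup.of 1)⁻¹ * (FreeGroup.of 2)⁻¹ * FreeGroup.of 1 * FreeGroup.of 2 *
        FreeGroup.of 1)⁻¹ ∈ C1rels by simp [C1rels]))
  simp only [map_mul, map_inv] at this
  exact mul_inv_eq_one.mp this

lemma comm (h1 : C1rels ⊆ rels) :
    Commute (PresentedGroup.of 0 : PresentedGroup rels) (PresentedGroup.of 2) := by
  set a : PresentedGroup rels := PresentedGroup.of 0 with ha
  set c : PresentedGroup rels := PresentedGroup.of 2 with hc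
  have h : a = a⁻¹ * c⁻¹ * a * c * a := by
    have := hconj h1; rwa [← hab h1] at this
  have h2 := congrArg (fun x => c * a * x * a⁻¹) h
  simp only [mul_assoc, mul_inv_cancel_left, mul_inv_cancel, mul_one,
    inv_mul_cancel_left] at h2
  unfold Commute SemiconjBy
  exact h2.symm

end C1aux


/-- The group `⟨x₁, x₁', x₂ | x₁ = x₁', (x₁'x₁x₁'⁻¹x₂)² = (x₂x₁'x₁x₁'⁻¹)²,
x₁ = x₁'⁻¹x₂⁻¹x₁'x₂x₁'⟩` is isomorphic to `ℤ²`, and adding the projective relation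
`x₂x₁'x₁ = e` yields `ℤ`. -/
theorem stmt_6 :
    Nonempty (PresentedGroup C1rels ≃* Multiplicative (ℤ × ℤ)) ∧
    Nonempty (PresentedGroup
        (C1rels ∪ {FreeGroup.of 2 * FreeGroup.of 1 * FreeGroup.of 0}) ≃*
      Multiplicative ℤ) := by
  constructor
  · -- part 1
    set G := PresentedGroup C1rels
    set a : G := PresentedGroup.of 0 with ha
    set c : G := PresentedGroup.of 2 with hc
    have hab : a = PresentedGroup.of 1 := C1aux.hab le_rfl
    have comm : Commute a c := C1aux.comm le_rfl
    set F : Fin 3 → Multiplicative (ℤ × ℤ) :=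
      fun i => Multiplicative.ofAdd (if i = 2 then (0, 1) else (1, 0)) with hFdef
    have hF : ∀ r ∈ C1rels, FreeGroup.lift F r = 1 := by
      intro r hr
      simp only [C1rels, Set.mem_insert_iff, Set.mem_singleton_iff] at hr
      rcases hr with rfl | rfl | rfl <;>
        simp [F, map_mul, map_inv, map_pow] <;> decide
    set f : G →* Multiplicative (ℤ × ℤ) := PresentedGroup.toGroup hF with hf
    have hgm : ∀ z w : Multiplicative (ℤ × ℤ),
        a ^ (z * w).toAdd.1 * c ^ (z * w).toAdd.2 =
          (a ^ z.toAdd.1 * c ^ z.toAdd.2) * (a ^ w.toAdd.1 * c ^ w.toAdd.2) := by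
      intro z w
      have hc : ∀ m n : ℤ, c ^ n * a ^ m = a ^ m * c ^ n :=
        fun m n => ((comm.zpow_zpow m n).symm).eq
      show a ^ (z.toAdd.1 + w.toAdd.1) * c ^ (z.toAdd.2 + w.toAdd.2) = _
      rw [zpow_add, zpow_add, mul_assoc, mul_assoc, ← mul_assoc (a ^ w.toAdd.1),
        ← hc, mul_assoc]
    set g : Multiplicative (ℤ × ℤ) →* G :=
      MonoidHom.mk' (fun z => a ^ z.toAdd.1 * c ^ z.toAdd.2) hgm with hg
    refine ⟨MonoidHom.toMulEquiv f g ?_ ?_⟩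
    · ext x
      fin_cases x <;>
        simp only [MonoidHom.comp_apply, MonoidHom.id_apply, hf, hg,
          PresentedGroup.toGroup.of, MonoidHom.mk'_apply, F]
      · simp [← ha]
      · simp [← ha, hab]
      · simp [← hc]
    · apply MonoidHom.ext; intro z
      simp only [MonoidHom.comp_apply, MonoidHom.id_apply, hg, MonoidHom.mk'_apply,
        map_mul, map_zpow]
      have h0 : f a = Multiplicative.ofAdd ((1 : ℤ), (0 : ℤ)) := by
        rw [hf, ha, PresentedGroup.toGroup.of]; rfl
      have h2 : f c = Multiplicative.ofAdd ((0 : ℤ), (1 : ℤ)) := by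
        rw [hf, hc, PresentedGroup.toGroup.of]; rfl
      rw [h0, h2, ← ofAdd_zsmul, ← ofAdd_zsmul, ← ofAdd_add]
      have : (z.toAdd.1 • ((1 : ℤ), (0 : ℤ)) + z.toAdd.2 • ((0 : ℤ), (1 : ℤ))) = z.toAdd := by
        simp [Prod.ext_iff]
      rw [this, ofAdd_toAdd]
  · -- part 2
    set rels := C1rels ∪ {FreeGroup.of 2 * FreeGroup.of 1 * FreeGroup.of 0} with hrels
    set G := PresentedGroup rels
    set a : G := PresentedGroup.of 0 with ha
    set c : G := PresentedGroup.of 2 with hc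
    have hsub : C1rels ⊆ rels := Set.subset_union_left
    have hab : a = PresentedGroup.of 1 := C1aux.hab hsub
    have hca : c = a ^ (-2 : ℤ) := by
      have := C1aux.rel_one (rels := rels)
        (show FreeGroup.of 2 * FreeGroup.of 1 * FreeGroup.of 0 ∈ rels by
          exact Set.mem_union_right _ rfl)
      simp only [map_mul] at this
      replace this : c * PresentedGroup.of 1 * a = 1 := this
      rw [← hab] at this
      have h2 : c * (a * a) = 1 := by rw [← mul_assoc]; exact this
      have h3 : a ^ (2 : ℤ) = a * a := by
        rw [show (2 : ℤ) = 1 + 1 from rfl, zpow_add, zpow_one]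
      rw [zpow_neg, eq_inv_iff_mul_eq_one, h3]
      exact h2
    set F : Fin 3 → Multiplicative ℤ :=
      fun i => Multiplicative.ofAdd (if i = 2 then (-2 : ℤ) else 1) with hFdef
    have hF : ∀ r ∈ rels, FreeGroup.lift F r = 1 := by
      intro r hr
      rcases hr with hr | hr
      · simp only [C1rels, Set.mem_insert_iff, Set.mem_singleton_iff] at hr
        rcases hr with rfl | rfl | rfl <;>
          simp [F, map_mul, map_inv, map_pow] <;> decide
      · rw [Set.mem_singleton_iff] at hr
        subst hr
        simp [F, map_mul] ; decide
    set f : G →* Multiplicative ℤ := PresentedGroup.toGroup hF with hf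
    set g : Multiplicative ℤ →* G := zpowersHom G a with hg
    refine ⟨MonoidHom.toMulEquiv f g ?_ ?_⟩
    · ext x
      fin_cases x <;>
        simp only [MonoidHom.comp_apply, MonoidHom.id_apply, hf, hg,
          PresentedGroup.toGroup.of, zpowersHom_apply, F]
      · simp [← ha]
      · simp [← ha, hab]
      · simp [← hc, hca]
    · apply MonoidHom.ext; intro z
      simp only [MonoidHom.comp_apply, MonoidHom.id_apply, hg, zpowersHom_apply, map_zpow]
      have h0 : f a = Multiplicative.ofAdd (1 : ℤ) := by
        rw [hf, ha, PresentedGroup.toGroup.of]; rfl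
      rw [h0, ← ofAdd_zsmul]
      simp
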